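/- arXiv:2103.12846 — 5 statements merged into one kernel-verified Lean document; each statement's English description precedes it below -/
import Mathlib

section
/- For real numbers d > 1 and x, y > 0 with x ≠ y, the function ψ(x,y,d) = x^{d-1} y^{-d} + x^{1-d} y^{d} - (1-d)(x + 1/x) - d(y + 1/y) is strictly positive. -/
/-!
Both halves of `ψ` are instances of one weighted AM–GM (Bernoulli) inequality: writing
`T(a, b) = a ^ (1 - d) * b ^ d + (d - 1) * a - d * b`, we have `ψ(x, y, d) = T(x, y) + T(1/x, 1/y)`,
and `T(a, b) = a * ((b/a) ^ d - 1 - d * (b/a - 1)) > 0` for `a ≠ b` by Bernoulli's inequality.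
-/

open Real

lemma mul_lt_rpow_add_sub_one {r p : ℝ} (hr : 0 ≤ r) (hr1 : r ≠ 1) (hp : 1 < p) :
    p * r < r ^ p + (p - 1) := by
  have h := one_add_mul_self_lt_rpow_one_add (s := r - 1) (by linarith) (sub_ne_zero.2 hr1) hp
  rw [add_sub_cancel] at h
  linarith

lemma mul_lt_rpow_one_sub_mul_rpow_add {a b d : ℝ} (ha : 0 < a) (hb : 0 < b) (hab : a ≠ b)
    (hd : 1 < d) : d * b < a ^ (1 - d) * b ^ d + (d - 1) * a := by
  have hba : b / a ≠ 1 := fun h => hab ((div_eq_one_iff_eq ha.ne').1 h).symm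
  have h := mul_lt_mul_of_pos_left (mul_lt_rpow_add_sub_one (div_pos hb ha).le hba hd) ha
  have hpow : a * (b / a) ^ d = a ^ (1 - d) * b ^ d := by
    rw [div_rpow hb.le ha.le, rpow_sub ha, rpow_one]
    ring
  rw [mul_add, hpow, mul_left_comm, mul_div_cancel₀ b ha.ne'] at h
  linarith

theorem psi_pos (d x y : ℝ) (hd : 1 < d) (hx : 0 < x) (hy : 0 < y) (hxy : x ≠ y) :
    0 < x ^ (d - 1) * y ^ (-d) + x ^ (1 - d) * y ^ d
        - (1 - d) * (x + 1 / x) - d * (y + 1 / y) := by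
  have h := mul_lt_rpow_one_sub_mul_rpow_add hx hy hxy hd
  have hinv := mul_lt_rpow_one_sub_mul_rpow_add (inv_pos.2 hx) (inv_pos.2 hy)
    (inv_injective.ne hxy) hd
  have hpow : x⁻¹ ^ (1 - d) * y⁻¹ ^ d = x ^ (d - 1) * y ^ (-d) := by
    rw [inv_rpow hx.le, inv_rpow hy.le, ← rpow_neg hx.le, ← rpow_neg hy.le, neg_sub]
  rw [hpow] at hinv
  simp only [one_div]
  linarith
end

section
/- For y > x > 0 and d ≥ 2, the derivative ζ'(y) = d(1 - d/2) y^{d-1} + (d/2)(d-1) x y^{d-2} - (d/2) x^{d-1} is nonpositive. -/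
theorem zeta_deriv_nonpos (x y d : ℝ) (hx : 0 < x) (hxy : x < y) (hd : 2 ≤ d) :
    d * (1 - d / 2) * y ^ (d - 1) + (d / 2) * (d - 1) * x * y ^ (d - 2)
      - (d / 2) * x ^ (d - 1) ≤ 0 := by
  have hy : 0 < y := hx.trans hxy
  -- MVT for t ↦ t^(d-1) on [x,y]
  have hcont : ContinuousOn (fun t : ℝ => t ^ (d - 1)) (Set.Icc x y) := by
    intro t ht
    exact (Real.continuousAt_rpow_const t (d - 1)
      (Or.inl (lt_of_lt_of_le hx ht.1).ne')).continuousWithinAt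
  have hderiv : ∀ t ∈ Set.Ioo x y,
      HasDerivAt (fun t : ℝ => t ^ (d - 1)) ((d - 1) * t ^ (d - 2)) t := by
    intro t ht
    have h := Real.hasDerivAt_rpow_const (p := d - 1)
      (Or.inl (hx.trans ht.1).ne')
    have : d - 1 - 1 = d - 2 := by ring
    rwa [this] at h
  obtain ⟨ξ, hξ, hslope⟩ := exists_hasDerivAt_eq_slope (fun t : ℝ => t ^ (d - 1))
    (fun t => (d - 1) * t ^ (d - 2)) hxy hcont hderiv
  have hξpos : 0 < ξ := hx.trans hξ.1
  have hmono : ξ ^ (d - 2) ≤ y ^ (d - 2) :=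
    Real.rpow_le_rpow hξpos.le hξ.2.le (by linarith)
  have hyx : 0 < y - x := sub_pos.mpr hxy
  have hkey : y ^ (d - 1) - x ^ (d - 1) ≤ (d - 1) * y ^ (d - 2) * (y - x) := by
    have heq : (d - 1) * ξ ^ (d - 2) * (y - x) = y ^ (d - 1) - x ^ (d - 1) := by
      field_simp at hslope; linarith [hslope]
    have h1 : (d - 1) * ξ ^ (d - 2) ≤ (d - 1) * y ^ (d - 2) :=
      mul_le_mul_of_nonneg_left hmono (by linarith)
    nlinarith [mul_le_mul_of_nonneg_right h1 hyx.le]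
  have hA : y ^ (d - 1) = y ^ (d - 2) * y := by
    rw [← Real.rpow_add_one hy.ne' (d - 2)]; ring_nf
  have hbr : (2 - d) * y ^ (d - 1) + (d - 1) * x * y ^ (d - 2) - x ^ (d - 1) ≤ 0 := by
    have h2 : (d - 1) * y ^ (d - 2) * (y - x)
        = (d - 1) * y ^ (d - 1) - (d - 1) * x * y ^ (d - 2) := by
      rw [hA]; ring
    linarith [hkey, h2]
  have hfin := mul_le_mul_of_nonneg_left hbr (by linarith : (0:ℝ) ≤ d / 2)
  linarith [hfin]
end

section
/- Fix y > 0 and d > 1, and define ψ(x) = x^{d-1} y^{-d} + x^{1-d} y^{d} - (1-d)(x + 1/x) - d(y + 1/y) for x > 0. Then the derivative ψ'(x) = (d-1)(1/x^2)[(x/y)^d - 1] - (d-1)[(y/x)^d - 1] is strictly negative for 0 < x < y and strictly positive for x > y. -/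
theorem psi_deriv_sign (y d : ℝ) (hy : 0 < y) (hd : 1 < d) :
    (∀ x : ℝ, 0 < x → x < y →
      (d - 1) * (1 / x ^ 2) * ((x / y) ^ d - 1) - (d - 1) * ((y / x) ^ d - 1) < 0) ∧
    (∀ x : ℝ, y < x →
      0 < (d - 1) * (1 / x ^ 2) * ((x / y) ^ d - 1) - (d - 1) * ((y / x) ^ d - 1)) := by
  have hd0 : (0:ℝ) < d := by linarith
  have hd1 : (0:ℝ) < d - 1 := by linarith
  constructor
  · intro x hx hxy
    have h1 : (x / y) ^ d < 1 :=
      Real.rpow_lt_one (by positivity) ((div_lt_one hy).mpr hxy) hd0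
    have h2 : (1:ℝ) < (y / x) ^ d :=
      Real.one_lt_rpow_iff_of_pos (by positivity) |>.mpr (Or.inl ⟨(one_lt_div hx).mpr hxy, hd0⟩)
    have hx2 : (0:ℝ) < 1 / x ^ 2 := by positivity
    nlinarith [mul_pos hd1 hx2]
  · intro x hxy
    have hx : (0:ℝ) < x := lt_trans hy hxy
    have h1 : (1:ℝ) < (x / y) ^ d :=
      Real.one_lt_rpow_iff_of_pos (by positivity) |>.mpr (Or.inl ⟨(one_lt_div hy).mpr hxy, hd0⟩)
    have h2 : (y / x) ^ d < 1 :=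
      Real.rpow_lt_one (by positivity) ((div_lt_one hx).mpr hxy) hd0
    have hx2 : (0:ℝ) < 1 / x ^ 2 := by positivity
    nlinarith [mul_pos hd1 hx2]
end

section
/- Let expit(u) = e^u/(1+e^u). Suppose parameters (a, b, β₀, β₁) with 0 ≤ a < 1, b > 0 and (a', b', β₀', β₁') with 0 ≤ a' < 1, b' > 0 satisfy a + b·expit(β₀ + β₁x) = a' + b'·expit(β₀' + β₁'x) for all x ∈ ℝ. If β₁ ≠ 0, then (a, b, β₀, β₁) = (a', b', β₀', β₁'). -/
/-!
Since `expit` is Mathlib's sigmoid, `x ↦ a + b * expit (β₀ + β₁ * x)` with `b > 0` is strictly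
monotone in the direction of the sign of `β₁`, so the two slopes have the same sign; replacing `x`
by `-x` makes both positive. The limits at `-∞` and `+∞` are then `a` and `a + b`, which identifies
`a` and `b`, and injectivity of `expit` identifies the two affine functions `β₀ + β₁ * x`.
-/

open Filter Topology Real

noncomputable def expit (u : ℝ) : ℝ := Real.exp u / (1 + Real.exp u)

theorem expit_eq_sigmoid : expit = sigmoid := by
  funext u
  rw [expit, sigmoid_def, exp_neg]
  field_simp
  ring

theorem expit_strictMono : StrictMono expit := expit_eq_sigmoid ▸ sigmoid_strictMono

section

variable {a b β₀ β₁ a' b' β₀' β₁' : ℝ}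

theorem tendsto_add_mul_expit_atTop (a b β₀ : ℝ) (hβ₁ : 0 < β₁) :
    Tendsto (fun x => a + b * expit (β₀ + β₁ * x)) atTop (𝓝 (a + b)) := by
  have hlin : Tendsto (fun x => β₀ + β₁ * x) atTop atTop :=
    tendsto_atTop_add_const_left _ _ (tendsto_id.const_mul_atTop hβ₁)
  simpa [expit_eq_sigmoid] using ((tendsto_sigmoid_atTop.comp hlin).const_mul b).const_add a

theorem tendsto_add_mul_expit_atBot (a b β₀ : ℝ) (hβ₁ : 0 < β₁) :
    Tendsto (fun x => a + b * expit (β₀ + β₁ * x)) atBot (𝓝 a) := by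
  have hlin : Tendsto (fun x => β₀ + β₁ * x) atBot atBot :=
    tendsto_atBot_add_const_left _ _ (tendsto_id.const_mul_atBot hβ₁)
  simpa [expit_eq_sigmoid] using ((tendsto_sigmoid_atBot.comp hlin).const_mul b).const_add a

theorem pos_of_forall_add_mul_expit_eq (hb : 0 < b) (hb' : 0 < b') (hβ₁ : 0 < β₁)
    (heq : ∀ x, a + b * expit (β₀ + β₁ * x) = a' + b' * expit (β₀' + β₁' * x)) :
    0 < β₁' := by
  by_contra! hβ₁'
  have hlt : a + b * expit (β₀ + β₁ * 0) < a + b * expit (β₀ + β₁ * 1) := by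
    gcongr
    exact expit_strictMono (by linarith)
  have hle : a' + b' * expit (β₀' + β₁' * 1) ≤ a' + b' * expit (β₀' + β₁' * 0) := by
    gcongr
    exact expit_strictMono.monotone (by linarith)
  rw [heq, heq] at hlt
  exact hlt.not_ge hle

theorem eq_of_forall_add_mul_expit_eq_of_pos (hb : 0 < b) (hb' : 0 < b') (hβ₁ : 0 < β₁)
    (heq : ∀ x, a + b * expit (β₀ + β₁ * x) = a' + b' * expit (β₀' + β₁' * x)) :
    a = a' ∧ b = b' ∧ β₀ = β₀' ∧ β₁ = β₁' := by
  have hβ₁' := pos_of_forall_add_mul_expit_eq hb hb' hβ₁ heq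
  have hfun := funext heq
  have hbot : a = a' := tendsto_nhds_unique (hfun ▸ tendsto_add_mul_expit_atBot a b β₀ hβ₁)
    (tendsto_add_mul_expit_atBot a' b' β₀' hβ₁')
  have htop : a + b = a' + b' := tendsto_nhds_unique (hfun ▸ tendsto_add_mul_expit_atTop a b β₀ hβ₁)
    (tendsto_add_mul_expit_atTop a' b' β₀' hβ₁')
  obtain rfl := hbot
  obtain rfl : b = b' := by linarith
  have hlin (x : ℝ) : β₀ + β₁ * x = β₀' + β₁' * x := by
    exact expit_strictMono.injective (mul_left_cancel₀ hb.ne' (add_left_cancel (heq x)))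
  have h0 := hlin 0
  have h1 := hlin 1
  exact ⟨rfl, rfl, by simpa using h0, by linarith⟩

end

theorem global_identifiability_continuum_general (a b β₀ β₁ a' b' β₀' β₁' : ℝ)
    (hb : 0 < b)
    (hb' : 0 < b')
    (heq : ∀ x : ℝ, a + b * expit (β₀ + β₁ * x) = a' + b' * expit (β₀' + β₁' * x))
    (hβ₁ : β₁ ≠ 0) :
    a = a' ∧ b = b' ∧ β₀ = β₀' ∧ β₁ = β₁' := by
  rcases hβ₁.lt_or_gt with hneg | hpos
  · obtain ⟨rfl, rfl, rfl, hslope⟩ := eq_of_forall_add_mul_expit_eq_of_pos (β₁ := -β₁)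
      (β₁' := -β₁') hb hb' (neg_pos.2 hneg) fun x => by simpa using heq (-x)
    exact ⟨rfl, rfl, rfl, neg_inj.1 hslope⟩
  · exact eq_of_forall_add_mul_expit_eq_of_pos hb hb' hpos heq

theorem global_identifiability_continuum (a b β₀ β₁ a' b' β₀' β₁' : ℝ)
    (ha : 0 ≤ a) (ha1 : a < 1) (hb : 0 < b)
    (ha' : 0 ≤ a') (ha1' : a' < 1) (hb' : 0 < b')
    (heq : ∀ x : ℝ, a + b * expit (β₀ + β₁ * x) = a' + b' * expit (β₀' + β₁' * x))
    (hβ₁ : β₁ ≠ 0) :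
    a = a' ∧ b = b' ∧ β₀ = β₀' ∧ β₁ = β₁' :=
  global_identifiability_continuum_general a b β₀ β₁ a' b' β₀' β₁' hb hb' heq hβ₁
end

section
/- For d > 1 and y > x > 0, define φ(x,y,d) = ψ(x,y,d) / [((y-x)/x^{d-1})((y^d - x^d)/(y-x) - d x^{d-1})], where ψ(x,y,d) = x^{d-1} y^{-d} + x^{1-d} y^{d} - (1-d)(x + 1/x) - d(y + 1/y). Then the denominator ((y-x)/x^{d-1})((y^d - x^d)/(y-x) - d x^{d-1}) is strictly positive and the numerator ψ(x,y,d) is strictly positive, so φ(x,y,d) > 0. -/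
theorem phi_pos (x y d : ℝ) (hx : 0 < x) (hxy : x < y) (hd : 1 < d) :
    0 < ((y - x) / x ^ (d - 1)) * ((y ^ d - x ^ d) / (y - x) - d * x ^ (d - 1)) ∧
    0 < x ^ (d - 1) * y ^ (-d) + x ^ (1 - d) * y ^ d
        - (1 - d) * (x + 1 / x) - d * (y + 1 / y) ∧
    0 < (x ^ (d - 1) * y ^ (-d) + x ^ (1 - d) * y ^ d
          - (1 - d) * (x + 1 / x) - d * (y + 1 / y))
        / (((y - x) / x ^ (d - 1)) * ((y ^ d - x ^ d) / (y - x) - d * x ^ (d - 1))) := by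
  have hy : 0 < y := hx.trans hxy
  have hA : 0 < x ^ d := Real.rpow_pos_of_pos hx d
  have hB : 0 < y ^ d := Real.rpow_pos_of_pos hy d
  set A := x ^ d with hAdef
  set B := y ^ d with hBdef
  -- Bernoulli at s = y/x - 1 > 0
  have h1 : 1 + d * (y / x - 1) < B / A := by
    have hs : (0:ℝ) < y / x - 1 := by
      rw [sub_pos, lt_div_iff₀ hx]; linarith
    have := one_add_mul_self_lt_rpow_one_add (by linarith : (-1:ℝ) ≤ y / x - 1)
      (ne_of_gt hs) hd
    have hdiv : (1 + (y / x - 1)) ^ d = B / A := by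
      rw [show 1 + (y / x - 1) = y / x by ring, Real.div_rpow hy.le hx.le]
    linarith [hdiv ▸ this]
  -- Bernoulli at s = x/y - 1 ∈ (-1, 0)
  have h2 : 1 + d * (x / y - 1) < A / B := by
    have hs : x / y - 1 < 0 := by
      rw [sub_neg, div_lt_one hy]; exact hxy
    have hs' : (-1:ℝ) ≤ x / y - 1 := by
      have : 0 < x / y := div_pos hx hy
      linarith
    have := one_add_mul_self_lt_rpow_one_add hs' (ne_of_lt hs) hd
    have hdiv : (1 + (x / y - 1)) ^ d = A / B := by
      rw [show 1 + (x / y - 1) = x / y by ring, Real.div_rpow hx.le hy.le]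
    linarith [hdiv ▸ this]
  -- cleared-denominator versions
  have hb1 : A * x + d * A * (y - x) < B * x := by
    have h := (mul_lt_mul_of_pos_left h1 (mul_pos hA hx))
    have h' : A * x * (B / A) = B * x := by field_simp
    have h'' : A * x * (1 + d * (y / x - 1)) = A * x + d * A * (y - x) := by
      field_simp
    linarith [h'' ▸ h' ▸ h]
  have hb2 : B * y + d * B * (x - y) < A * y := by
    have h := (mul_lt_mul_of_pos_left h2 (mul_pos hB hy))
    have h' : B * y * (A / B) = A * y := by field_simp
    have h'' : B * y * (1 + d * (x / y - 1)) = B * y + d * B * (x - y) := by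
      field_simp
    linarith [h'' ▸ h' ▸ h]
  -- rewrite the rpow expressions
  have e1 : x ^ (d - 1) = A / x := by
    rw [Real.rpow_sub hx, Real.rpow_one]
  have e2 : x ^ (1 - d) = x / A := by
    rw [Real.rpow_sub hx, Real.rpow_one]
  have e3 : y ^ (-d) = B⁻¹ := by
    rw [Real.rpow_neg hy.le]
  rw [e1, e2, e3]
  have hyx : 0 < y - x := by linarith
  have hden : 0 < (y - x) / (A / x) * ((B - A) / (y - x) - d * (A / x)) := by
    apply mul_pos (div_pos hyx (div_pos hA hx))
    rw [sub_pos, lt_div_iff₀ hyx]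
    rw [show d * (A / x) * (y - x) = d * A * (y - x) / x by ring, div_lt_iff₀ hx]
    nlinarith [hb1]
  have hnum : 0 < A / x * B⁻¹ + x / A * B - (1 - d) * (x + 1 / x) - d * (y + 1 / y) := by
    have e : A / x * B⁻¹ + x / A * B - (1 - d) * (x + 1 / x) - d * (y + 1 / y)
        = (A * y - (B * y + d * B * (x - y))) / (x * B * y)
          + (B * x - (A * x + d * A * (y - x))) / A := by
      field_simp
      ring
    rw [e]
    have p1 : 0 < (A * y - (B * y + d * B * (x - y))) / (x * B * y) :=
      div_pos (by linarith) (by positivity)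
    have p2 : 0 < (B * x - (A * x + d * A * (y - x))) / A :=
      div_pos (by linarith) (by positivity)
    linarith
  exact ⟨hden, hnum, div_pos hnum hden⟩
end
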